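/- arXiv:math/0508392 — 6 statements merged into one kernel-verified Lean document; each statement's English description precedes it below -/
import Mathlib

section
/- Let $M \subseteq \mathbb{Z}^n$ be a positive normal affine monoid with $\mathrm{gp}(M) = \mathbb{Z}^n$, with support forms $\sigma_1, \dots, \sigma_s$ of $\mathrm{cone}(M)$. Then $K[M]$ is Gorenstein if and only if there exists a (necessarily unique) $y \in \mathrm{relint}(M)$ with $\sigma_i(y) = 1$ for all $i = 1, \dots, s$. -/
/-!
By normality, `M` is the set of lattice points on which all support forms are nonnegative: a
lattice point of `cone(M)` is, after a conic Carathéodory reduction to linearly independent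
generators, a nonnegative *rational* combination of them, so a multiple of it lies in `M`.
Consequently `relint(M) = y + M` as soon as `σᵢ(y) = 1` for all `i`. Conversely, each facet
`σᵢ = 0` carries a point of `M` in its relative interior (irredundancy of `σᵢ`), and adding a
large multiple of it to a lattice point `x₀` with `σᵢ(x₀) = 1` (primitivity of `σᵢ`) yields a
point of `relint(M)` on which `σᵢ` is `1`; it lies in `y + M`, forcing `σᵢ(y) = 1`. Positivity of
`M` makes such a `y` unique.
-/

open scoped BigOperators

noncomputable section

/-- The canonical map `ℤⁿ → ℝⁿ`. -/
def toR {n : ℕ} (z : Fin n → ℤ) : Fin n → ℝ := fun i => (z i : ℝ)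

/-- The real extension of an integral linear form. -/
def realForm {n : ℕ} (ℓ : (Fin n → ℤ) →ₗ[ℤ] ℤ) (x : Fin n → ℝ) : ℝ :=
  ∑ k, (ℓ (Pi.single k 1) : ℝ) * x k

/-- The cone in `ℝⁿ` generated by a set of lattice points. -/
def coneOf {n : ℕ} (M : Set (Fin n → ℤ)) : Set (Fin n → ℝ) :=
  {x | ∃ (t : Finset (Fin n → ℤ)) (c : (Fin n → ℤ) → ℝ),
    (↑t : Set (Fin n → ℤ)) ⊆ M ∧ (∀ a, 0 ≤ c a) ∧ x = ∑ a ∈ t, c a • toR a}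

/-- `relint M` with respect to the support forms `σ`. -/
def relintM {n s : ℕ} (M : AddSubmonoid (Fin n → ℤ))
    (σ : Fin s → ((Fin n → ℤ) →ₗ[ℤ] ℤ)) : Set (Fin n → ℤ) :=
  {a | a ∈ M ∧ ∀ i, 0 < σ i a}

open Finset

section ConicCaratheodory

variable {ι 𝕜 E : Type*} [Field 𝕜] [LinearOrder 𝕜] [IsStrictOrderedRing 𝕜]
  [AddCommGroup E] [Module 𝕜 E] {v : ι → E}

theorem exists_erase_nonneg_sum_smul_eq_of_not_linearIndepOn [DecidableEq ι] {t : Finset ι}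
    (ht : ¬LinearIndepOn 𝕜 v t) {c : ι → 𝕜} (hc : ∀ i ∈ t, 0 ≤ c i) :
    ∃ i₀ ∈ t, ∃ c' : ι → 𝕜, (∀ i ∈ t.erase i₀, 0 ≤ c' i) ∧
      ∑ i ∈ t.erase i₀, c' i • v i = ∑ i ∈ t, c i • v i := by
  obtain ⟨g, hg, hgpos⟩ : ∃ g : ι → 𝕜, ∑ i ∈ t, g i • v i = 0 ∧ ∃ i ∈ t, 0 < g i := by
    obtain ⟨g, hg, j, hj, hgj⟩ := not_linearIndepOn_finset_iff.1 ht
    rcases hgj.lt_or_gt with hneg | hpos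
    · exact ⟨-g, by simp [neg_smul, hg], j, hj, neg_pos.2 hneg⟩
    · exact ⟨g, hg, j, hj, hpos⟩
  obtain ⟨i₀, hi₀, hmin⟩ := (t.filter (0 < g ·)).exists_min_image (fun i => c i / g i)
    (by simpa [Finset.Nonempty] using hgpos)
  rw [mem_filter] at hi₀
  -- `τ` is the largest step with `c - τ • g ≥ 0` on `t`; it kills the coefficient at `i₀`.
  set τ := c i₀ / g i₀
  have hτ : 0 ≤ τ := div_nonneg (hc i₀ hi₀.1) hi₀.2.le
  refine ⟨i₀, hi₀.1, fun i => c i - τ * g i, fun i hi => ?_, ?_⟩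
  · have hit := mem_of_mem_erase hi
    rcases le_or_gt (g i) 0 with hgi | hgi
    · nlinarith [hc i hit]
    · have := hmin i (mem_filter.2 ⟨hit, hgi⟩)
      rw [le_div_iff₀ hgi] at this
      linarith
  · rw [sum_erase t (by simp [τ, div_mul_cancel₀ _ hi₀.2.ne'])]
    simp [sub_smul, sum_sub_distrib, mul_smul, ← smul_sum, hg]

theorem exists_linearIndepOn_nonneg_sum_smul_eq (t : Finset ι) {c : ι → 𝕜}
    (hc : ∀ i ∈ t, 0 ≤ c i) :
    ∃ t' ⊆ t, ∃ c' : ι → 𝕜, LinearIndepOn 𝕜 v t' ∧ (∀ i ∈ t', 0 ≤ c' i) ∧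
      ∑ i ∈ t', c' i • v i = ∑ i ∈ t, c i • v i := by
  classical
  induction t using Finset.strongInduction generalizing c with
  | H t ih =>
    by_cases ht : LinearIndepOn 𝕜 v t
    · exact ⟨t, subset_rfl, c, ht, hc, rfl⟩
    obtain ⟨i₀, hi₀, c₁, hc₁, hsum₁⟩ := exists_erase_nonneg_sum_smul_eq_of_not_linearIndepOn ht hc
    obtain ⟨t', ht', c', hli, hc', hsum'⟩ := ih _ (erase_ssubset hi₀) hc₁
    exact ⟨t', ht'.trans (erase_subset _ _), c', hli, hc', hsum'.trans hsum₁⟩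

end ConicCaratheodory

theorem exists_pos_nat_mul_eq_natCast {ι : Type*} (t : Finset ι) {q : ι → ℚ}
    (hq : ∀ i ∈ t, 0 ≤ q i) : ∃ D : ℕ, 0 < D ∧ ∃ k : ι → ℕ, ∀ i ∈ t, (D : ℚ) * q i = k i := by
  refine ⟨∏ i ∈ t, (q i).den, prod_pos fun i _ => (q i).pos, ?_⟩
  have hint : ∀ i ∈ t, ∃ k : ℕ, ((∏ j ∈ t, (q j).den : ℕ) : ℚ) * q i = k := by
    intro i hi
    obtain ⟨e, he⟩ := dvd_prod_of_mem (fun j => (q j).den) hi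
    refine ⟨(q i).num.toNat * e, ?_⟩
    rw [he, Nat.cast_mul, Nat.cast_mul, mul_comm, ← mul_assoc, Rat.mul_den_eq_num]
    congr 1
    exact_mod_cast (Int.toNat_of_nonneg (Rat.num_nonneg.2 (hq i hi))).symm
  choose! k hk using hint
  exact ⟨k, hk⟩

theorem exists_apply_eq_one_of_gcd_eq_one {ι : Type*} [Fintype ι] [DecidableEq ι]
    (ℓ : (ι → ℤ) →ₗ[ℤ] ℤ) (h : univ.gcd (fun k => ℓ (Pi.single k 1)) = 1) :
    ∃ x : ι → ℤ, ℓ x = 1 := by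
  obtain ⟨g, hg⟩ := univ.gcd_eq_sum_mul (fun k => ℓ (Pi.single k 1))
  refine ⟨∑ k, g k • Pi.single k 1, ?_⟩
  rw [map_sum]
  exact (sum_congr rfl fun k _ => by rw [map_smul, smul_eq_mul, mul_comm]).trans (hg.symm.trans h)

def toRAddHom (n : ℕ) : (Fin n → ℤ) →+ (Fin n → ℝ) := (Int.castAddHom ℝ).compLeft (Fin n)

theorem coe_toRAddHom (n : ℕ) : ⇑(toRAddHom n) = toR := rfl

theorem toR_injective (n : ℕ) : Function.Injective (toR (n := n)) :=
  fun _ _ h => funext fun k => Int.cast_injective (congrFun h k)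

def realFormLinearMap {n : ℕ} (ℓ : (Fin n → ℤ) →ₗ[ℤ] ℤ) : (Fin n → ℝ) →ₗ[ℝ] ℝ where
  toFun := realForm ℓ
  map_add' x y := by simp only [realForm, Pi.add_apply, mul_add, sum_add_distrib]
  map_smul' r x := by
    simp only [realForm, Pi.smul_apply, smul_eq_mul, RingHom.id_apply, mul_sum, mul_left_comm]

theorem coe_realFormLinearMap {n : ℕ} (ℓ : (Fin n → ℤ) →ₗ[ℤ] ℤ) :
    ⇑(realFormLinearMap ℓ) = realForm ℓ := rfl

theorem realForm_toR {n : ℕ} (ℓ : (Fin n → ℤ) →ₗ[ℤ] ℤ) (a : Fin n → ℤ) :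
    realForm ℓ (toR a) = ℓ a := by
  have hsingle : ∀ k : Fin n, (fun j => if k = j then (1 : ℤ) else 0) = Pi.single k 1 :=
    fun k => funext fun j => by simp [Pi.single_apply, eq_comm]
  rw [ℓ.pi_apply_eq_sum_univ a, realForm]
  push_cast
  exact sum_congr rfl fun k _ => by rw [hsingle, smul_eq_mul, Int.cast_mul, mul_comm]; rfl

theorem realForm_sum_smul_toR {n : ℕ} (ℓ : (Fin n → ℤ) →ₗ[ℤ] ℤ) (t : Finset (Fin n → ℤ))
    (c : (Fin n → ℤ) → ℝ) : realForm ℓ (∑ m ∈ t, c m • toR m) = ∑ m ∈ t, c m * ℓ m := by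
  rw [← coe_realFormLinearMap, map_sum]
  simp only [map_smul, smul_eq_mul, coe_realFormLinearMap]
  exact sum_congr rfl fun m _ => congrArg (c m * ·) (realForm_toR ℓ m)

theorem toR_mem_coneOf {n : ℕ} {M : Set (Fin n → ℤ)} {a : Fin n → ℤ} (ha : a ∈ M) :
    toR a ∈ coneOf M :=
  ⟨{a}, fun _ => 1, by simpa using ha, fun _ => zero_le_one, by simp⟩

theorem exists_rat_eq_of_linearIndepOn_toR {n : ℕ} {t : Finset (Fin n → ℤ)}
    (ht : LinearIndepOn ℝ toR (t : Set (Fin n → ℤ))) {a : Fin n → ℤ} {c : (Fin n → ℤ) → ℝ}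
    (ha : toR a = ∑ m ∈ t, c m • toR m) : ∃ q : (Fin n → ℤ) → ℚ, ∀ m ∈ t, c m = q m := by
  -- A `ℚ`-linear retraction `π : ℝ → ℚ` turns `ha` into a second expansion with rational
  -- coefficients `π (c m)`; linear independence identifies the two.
  obtain ⟨π, hπ⟩ := (Algebra.linearMap ℚ ℝ).exists_leftInverse_of_injective
    (LinearMap.ker_eq_bot.2 (algebraMap ℚ ℝ).injective)
  have hπ_one : π 1 = 1 := by simpa using LinearMap.congr_fun hπ 1
  have hπ_int : ∀ (z : ℤ) (r : ℝ), π (z * r) = z * π r := fun z r => by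
    rw [← zsmul_eq_mul, map_zsmul, zsmul_eq_mul]
  have hπ_cast : ∀ z : ℤ, π z = z := fun z => by rw [← mul_one (z : ℝ), hπ_int, hπ_one, mul_one]
  have hq : toR a = ∑ m ∈ t, ((π (c m) : ℚ) : ℝ) • toR m := by
    funext k
    have hk := congr_arg (fun x => π (x k)) ha
    simp only [toR, Finset.sum_apply, Pi.smul_apply, smul_eq_mul, map_sum, mul_comm (c _), hπ_int,
      hπ_cast] at hk
    simp only [toR, Finset.sum_apply, Pi.smul_apply, smul_eq_mul, mul_comm _ ((_ : ℤ) : ℝ)]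
    exact_mod_cast hk
  have hzero := linearIndepOn_finset_iff.1 ht (fun m => c m - π (c m))
    (by simp only [sub_smul, sum_sub_distrib, ← ha, ← hq, sub_self])
  exact ⟨fun m => π (c m), fun m hm => sub_eq_zero.1 (hzero m hm)⟩

theorem exists_nsmul_eq_sum_nsmul_of_linearIndepOn_toR {n : ℕ} {t : Finset (Fin n → ℤ)}
    (ht : LinearIndepOn ℝ toR (t : Set (Fin n → ℤ))) {a : Fin n → ℤ} {c : (Fin n → ℤ) → ℝ}
    (hc : ∀ m ∈ t, 0 ≤ c m) (ha : toR a = ∑ m ∈ t, c m • toR m) :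
    ∃ D : ℕ, 0 < D ∧ ∃ k : (Fin n → ℤ) → ℕ, D • a = ∑ m ∈ t, k m • m := by
  obtain ⟨q, hcq⟩ := exists_rat_eq_of_linearIndepOn_toR ht ha
  obtain ⟨D, hD, k, hk⟩ := exists_pos_nat_mul_eq_natCast t (q := q) fun m hm => by
    exact_mod_cast hcq m hm ▸ hc m hm
  refine ⟨D, hD, k, toR_injective n ?_⟩
  rw [← coe_toRAddHom, map_nsmul, map_sum, coe_toRAddHom, ha, smul_sum]
  refine sum_congr rfl fun m hm => ?_
  rw [← coe_toRAddHom, map_nsmul, coe_toRAddHom, ← Nat.cast_smul_eq_nsmul ℝ D,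
    ← Nat.cast_smul_eq_nsmul ℝ (k m), smul_smul, hcq m hm, ← Rat.cast_natCast (k m), ← hk m hm,
    Rat.cast_mul, Rat.cast_natCast]

theorem exists_mem_pos_iff_of_mem_coneOf {n : ℕ} {M : AddSubmonoid (Fin n → ℤ)}
    {p : Fin n → ℝ} (hp : p ∈ coneOf (M : Set (Fin n → ℤ))) :
    ∃ u ∈ M, ∀ ℓ : (Fin n → ℤ) →ₗ[ℤ] ℤ, (∀ m ∈ M, 0 ≤ ℓ m) → (0 < ℓ u ↔ 0 < realForm ℓ p) := by
  classical
  obtain ⟨t, c, htM, hc, rfl⟩ := hp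
  -- The generators with positive coefficient lie on exactly the same faces as `p`.
  refine ⟨∑ m ∈ t.filter (0 < c ·), m, sum_mem fun m hm => htM (mem_filter.1 hm).1,
    fun ℓ hℓ => ?_⟩
  have hℓt : ∀ m ∈ t, (0 : ℝ) ≤ ℓ m := fun m hm => Int.cast_nonneg (hℓ m (htM hm))
  rw [realForm_sum_smul_toR, map_sum,
    sum_pos_iff_of_nonneg fun m hm => hℓ m (htM (mem_filter.1 hm).1),
    sum_pos_iff_of_nonneg fun m hm => mul_nonneg (hc m) (hℓt m hm)]
  constructor
  · rintro ⟨m, hm, hℓm⟩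
    rw [mem_filter] at hm
    exact ⟨m, hm.1, mul_pos hm.2 (Int.cast_pos.2 hℓm)⟩
  · rintro ⟨m, hm, hcℓ⟩
    exact ⟨m, mem_filter.2 ⟨hm, pos_of_mul_pos_left hcℓ (hℓt m hm)⟩,
      Int.cast_pos.1 (pos_of_mul_pos_right hcℓ (hc m))⟩

section AffineMonoid

variable {n s : ℕ} {M : AddSubmonoid (Fin n → ℤ)} {σ : Fin s → ((Fin n → ℤ) →ₗ[ℤ] ℤ)}

theorem form_nonneg_of_mem
    (hcone : coneOf (M : Set (Fin n → ℤ)) = {x | ∀ i, 0 ≤ realForm (σ i) x})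
    {a : Fin n → ℤ} (ha : a ∈ M) (i : Fin s) : 0 ≤ σ i a := by
  have h : toR a ∈ {x | ∀ i, 0 ≤ realForm (σ i) x} := hcone ▸ toR_mem_coneOf ha
  exact_mod_cast realForm_toR (σ i) a ▸ h i

theorem mem_of_forms_nonneg (hnorm : ∀ (x : Fin n → ℤ) (k : ℕ), 0 < k → (k : ℤ) • x ∈ M → x ∈ M)
    (hcone : coneOf (M : Set (Fin n → ℤ)) = {x | ∀ i, 0 ≤ realForm (σ i) x})
    {a : Fin n → ℤ} (ha : ∀ i, 0 ≤ σ i a) : a ∈ M := by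
  have hcone_a : toR a ∈ coneOf (M : Set (Fin n → ℤ)) :=
    hcone ▸ fun i => by rw [realForm_toR]; exact_mod_cast ha i
  obtain ⟨t, c, htM, hc, hac⟩ := hcone_a
  obtain ⟨t', ht', c', hli, hc', hsum⟩ :=
    exists_linearIndepOn_nonneg_sum_smul_eq (v := toR) t fun m _ => hc m
  obtain ⟨D, hD, k, hDa⟩ :=
    exists_nsmul_eq_sum_nsmul_of_linearIndepOn_toR hli hc' (hac.trans hsum.symm)
  refine hnorm a D hD ?_
  rw [natCast_zsmul, hDa]
  exact sum_mem fun m hm => nsmul_mem (htM (ht' hm)) _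

theorem mem_iff_forms_nonneg
    (hnorm : ∀ (x : Fin n → ℤ) (k : ℕ), 0 < k → (k : ℤ) • x ∈ M → x ∈ M)
    (hcone : coneOf (M : Set (Fin n → ℤ)) = {x | ∀ i, 0 ≤ realForm (σ i) x})
    (a : Fin n → ℤ) : a ∈ M ↔ ∀ i, 0 ≤ σ i a :=
  ⟨form_nonneg_of_mem hcone, mem_of_forms_nonneg hnorm hcone⟩

theorem exists_realForm_eq_zero_forall_pos {i : Fin s} {x : Fin n → ℝ}
    (hx : ∀ j, j ≠ i → 0 ≤ realForm (σ j) x) (hxi : realForm (σ i) x < 0)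
    {y : Fin n → ℤ} (hy : ∀ j, 0 < σ j y) :
    ∃ p, realForm (σ i) p = 0 ∧ ∀ j, j ≠ i → 0 < realForm (σ j) p := by
  have hform : ∀ j, realForm (σ j) ((-realForm (σ i) x) • toR y + (σ i y : ℝ) • x)
      = -realForm (σ i) x * σ j y + σ i y * realForm (σ j) x := fun j => by
    rw [← coe_realFormLinearMap, map_add, map_smul, map_smul, coe_realFormLinearMap,
      realForm_toR, smul_eq_mul, smul_eq_mul]
  refine ⟨_, by rw [hform]; ring, fun j hj => ?_⟩
  have hyj : (0 : ℝ) < σ j y := Int.cast_pos.2 (hy j)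
  have hyi : (0 : ℝ) < σ i y := Int.cast_pos.2 (hy i)
  rw [hform]
  exact add_pos_of_pos_of_nonneg (mul_pos (neg_pos.2 hxi) hyj) (mul_nonneg hyi.le (hx j hj))

theorem exists_mem_form_eq_zero_forall_pos
    (hcone : coneOf (M : Set (Fin n → ℤ)) = {x | ∀ i, 0 ≤ realForm (σ i) x}) {i : Fin s}
    (hirr : ∃ x : Fin n → ℝ, (∀ j, j ≠ i → 0 ≤ realForm (σ j) x) ∧ realForm (σ i) x < 0)
    {y : Fin n → ℤ} (hy : ∀ j, 0 < σ j y) :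
    ∃ u ∈ M, σ i u = 0 ∧ ∀ j, j ≠ i → 0 < σ j u := by
  obtain ⟨x, hx, hxi⟩ := hirr
  obtain ⟨p, hpi, hpj⟩ := exists_realForm_eq_zero_forall_pos hx hxi hy
  have hp : p ∈ coneOf (M : Set (Fin n → ℤ)) := hcone ▸ fun j => by
    rcases eq_or_ne j i with rfl | hj
    exacts [hpi.ge, (hpj j hj).le]
  obtain ⟨u, hu, hiff⟩ := exists_mem_pos_iff_of_mem_coneOf hp
  have hσM : ∀ j, ∀ m ∈ M, 0 ≤ σ j m := fun j m hm => form_nonneg_of_mem hcone hm j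
  refine ⟨u, hu, le_antisymm ?_ (hσM i u hu), fun j hj => (hiff _ (hσM j)).2 (hpj j hj)⟩
  exact not_lt.1 fun h => ((hiff _ (hσM i)).1 h).ne' hpi

theorem exists_mem_relintM_form_eq_one
    (hnorm : ∀ (x : Fin n → ℤ) (k : ℕ), 0 < k → (k : ℤ) • x ∈ M → x ∈ M)
    (hcone : coneOf (M : Set (Fin n → ℤ)) = {x | ∀ i, 0 ≤ realForm (σ i) x}) {i : Fin s}
    (hirr : ∃ x : Fin n → ℝ, (∀ j, j ≠ i → 0 ≤ realForm (σ j) x) ∧ realForm (σ i) x < 0)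
    (hprim : univ.gcd (fun k => σ i (Pi.single k 1)) = 1)
    {y : Fin n → ℤ} (hy : ∀ j, 0 < σ j y) :
    ∃ z ∈ relintM M σ, σ i z = 1 := by
  obtain ⟨x₀, hx₀⟩ := exists_apply_eq_one_of_gcd_eq_one (σ i) hprim
  obtain ⟨u, -, hui, huj⟩ := exists_mem_form_eq_zero_forall_pos hcone hirr hy
  have hlarge : ∀ᶠ N : ℕ in Filter.atTop, ∀ j, 0 < σ j (x₀ + N • u) := by
    refine Filter.eventually_all.2 fun j => ?_
    rcases eq_or_ne j i with rfl | hj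
    · exact Filter.Eventually.of_forall fun N => by
        rw [map_add, map_nsmul, hx₀, hui, smul_zero, add_zero]
        exact one_pos
    · refine (Filter.eventually_gt_atTop (σ j x₀).natAbs).mono fun N hN => ?_
      have hN' : |σ j x₀| < N := by rw [← Int.natCast_natAbs]; exact_mod_cast hN
      rw [map_add, map_nsmul, nsmul_eq_mul]
      nlinarith [neg_abs_le (σ j x₀), huj j hj]
  obtain ⟨N, hN⟩ := hlarge.exists
  exact ⟨x₀ + N • u, ⟨mem_of_forms_nonneg hnorm hcone fun j => (hN j).le, hN⟩,
    by rw [map_add, map_nsmul, hx₀, hui, smul_zero, add_zero]⟩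

theorem relintM_eq_image_add_of_forms_eq_one (hMσ : ∀ a, a ∈ M ↔ ∀ i, 0 ≤ σ i a)
    {y : Fin n → ℤ} (hy : ∀ i, σ i y = 1) :
    relintM M σ = (fun a => y + a) '' (M : Set (Fin n → ℤ)) := by
  ext z
  constructor
  · rintro ⟨-, hz⟩
    refine ⟨z - y, (hMσ _).2 fun i => ?_, add_sub_cancel y z⟩
    have := hz i
    rw [map_sub, hy]
    omega
  · rintro ⟨m, hm, rfl⟩
    have hmi := (hMσ m).1 hm
    refine ⟨(hMσ _).2 fun i => ?_, fun i => ?_⟩ <;>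
    · rw [map_add, hy]
      linarith [hmi i]

theorem forms_eq_one_of_relintM_eq_image_add (hMσ : ∀ a, a ∈ M ↔ ∀ i, 0 ≤ σ i a)
    (hz : ∀ i, ∃ z ∈ relintM M σ, σ i z = 1) {y : Fin n → ℤ}
    (h : relintM M σ = (fun a => y + a) '' (M : Set (Fin n → ℤ))) (i : Fin s) : σ i y = 1 := by
  have hy : y ∈ relintM M σ := h ▸ ⟨0, zero_mem M, add_zero y⟩
  obtain ⟨z, hzM, hzi⟩ := hz i
  rw [h] at hzM
  obtain ⟨m, hm, rfl⟩ := hzM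
  have := (hMσ m).1 hm i
  have := hy.2 i
  rw [map_add] at hzi
  omega

theorem eq_of_forms_eq (hpos : ∀ a ∈ M, -a ∈ M → a = 0) (hMσ : ∀ a, a ∈ M ↔ ∀ i, 0 ≤ σ i a)
    {y y' : Fin n → ℤ} (h : ∀ i, σ i y = σ i y') : y = y' := by
  have hmem : ∀ a, (∀ i, σ i a = 0) → a ∈ M := fun a ha => (hMσ a).2 fun i => (ha i).ge
  refine sub_eq_zero.1 (hpos _ (hmem _ fun i => ?_) (hmem _ fun i => ?_)) <;> simp [h i]

end AffineMonoid

theorem gorenstein_iff_interior_point_with_forms_one_general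
    (n s : ℕ) (M : AddSubmonoid (Fin n → ℤ))
    (hpos : ∀ a ∈ M, -a ∈ M → a = 0)
    (hnorm : ∀ (x : Fin n → ℤ) (k : ℕ), 0 < k → (k : ℤ) • x ∈ M → x ∈ M)
    (σ : Fin s → ((Fin n → ℤ) →ₗ[ℤ] ℤ))
    (hcone : coneOf (M : Set (Fin n → ℤ)) = {x | ∀ i, 0 ≤ realForm (σ i) x})
    (hirr : ∀ i, ∃ x : Fin n → ℝ,
      (∀ j, j ≠ i → 0 ≤ realForm (σ j) x) ∧ realForm (σ i) x < 0)
    (hprim : ∀ i, Finset.univ.gcd (fun k => σ i (Pi.single k 1)) = 1) :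
    (∃ y ∈ relintM M σ, relintM M σ = (fun a => y + a) '' (M : Set (Fin n → ℤ)))
      ↔ (∃! y : Fin n → ℤ, y ∈ relintM M σ ∧ ∀ i, σ i y = 1) := by
  have hMσ := mem_iff_forms_nonneg hnorm hcone
  constructor
  · rintro ⟨y, hy, h⟩
    have hone := forms_eq_one_of_relintM_eq_image_add hMσ
      (fun i => exists_mem_relintM_form_eq_one hnorm hcone (hirr i) (hprim i) hy.2) h
    exact ⟨y, ⟨hy, hone⟩, fun y' ⟨_, hone'⟩ =>
      eq_of_forms_eq hpos hMσ fun i => (hone' i).trans (hone i).symm⟩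
  · rintro ⟨y, ⟨hy, hone⟩, -⟩
    exact ⟨y, hy, relintM_eq_image_add_of_forms_eq_one hMσ hone⟩

/-- For a positive normal affine monoid `M ⊆ ℤⁿ` with `gp M = ℤⁿ` and
support forms `σ₁, …, σ_s`, the algebra `K[M]` is Gorenstein (i.e. `relint M = y + M`
for some `y`, by the Stanley–Danilov criterion) if and only if there exists a
(necessarily unique) `y ∈ relint M` with `σᵢ y = 1` for all `i`. -/
theorem gorenstein_iff_interior_point_with_forms_one
    (n s : ℕ) (M : AddSubmonoid (Fin n → ℤ)) (hfg : M.FG)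
    (hpos : ∀ a ∈ M, -a ∈ M → a = 0)
    (hnorm : ∀ (x : Fin n → ℤ) (k : ℕ), 0 < k → (k : ℤ) • x ∈ M → x ∈ M)
    (hgp : AddSubgroup.closure (M : Set (Fin n → ℤ)) = ⊤)
    (σ : Fin s → ((Fin n → ℤ) →ₗ[ℤ] ℤ))
    (hcone : coneOf (M : Set (Fin n → ℤ)) = {x | ∀ i, 0 ≤ realForm (σ i) x})
    (hirr : ∀ i, ∃ x : Fin n → ℝ,
      (∀ j, j ≠ i → 0 ≤ realForm (σ j) x) ∧ realForm (σ i) x < 0)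
    (hprim : ∀ i, Finset.univ.gcd (fun k => σ i (Pi.single k 1)) = 1) :
    (∃ y ∈ relintM M σ, relintM M σ = (fun a => y + a) '' (M : Set (Fin n → ℤ)))
      ↔ (∃! y : Fin n → ℤ, y ∈ relintM M σ ∧ ∀ i, σ i y = 1) :=
  gorenstein_iff_interior_point_with_forms_one_general n s M hpos hnorm σ hcone hirr hprim

end
end

section
/- A positive affine monoid $M \subseteq \mathbb{Z}^n$ has a unique minimal system of generators, consisting exactly of its irreducible elements, and this set (the Hilbert basis) is finite. -/
open scoped BigOperators

/-- The set of irreducible elements of an additive submonoid of `ℤⁿ`. -/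
def irreducibles {n : ℕ} (M : AddSubmonoid (Fin n → ℤ)) : Set (Fin n → ℤ) :=
  {x | x ∈ M ∧ x ≠ 0 ∧ ∀ a ∈ M, ∀ b ∈ M, x = a + b → a = 0 ∨ b = 0}

/-!
An irreducible element `x` lies in every generating set `S ⊆ M`, since otherwise `M \ {x}`
would be a submonoid containing `S`. For generation, fix nonzero generators `v i` of `M`
and write elements as `∑ i, c i • v i` with `c : ι → ℕ`. Positivity makes the representations
of a fixed element an antichain in `ι → ℕ`, hence finite by Dickson's lemma, so their lengths
`∑ i, c i` are bounded. Splitting a reducible element into two nonzero summands strictly lowers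
this bound for each summand, and induction on it writes every element as a sum of irreducibles.
-/

open Finset

section Representations

variable {ι A : Type*} [Fintype ι]

theorem linearCombination_mem [AddCommMonoid A] {M : AddSubmonoid A} {v : ι → A}
    (hvM : ∀ i, v i ∈ M) (c : ι → ℕ) : Fintype.linearCombination ℕ v c ∈ M := by
  rw [Fintype.linearCombination_apply]
  exact sum_mem fun i _ => nsmul_mem (hvM i) _

theorem one_le_sum_of_linearCombination_ne_zero [AddCommMonoid A] {v : ι → A} {c : ι → ℕ}
    (h : Fintype.linearCombination ℕ v c ≠ 0) : 1 ≤ ∑ i, c i := by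
  refine Nat.one_le_iff_ne_zero.2 fun hsum => h ?_
  rw [show c = 0 from funext fun i => Finset.sum_eq_zero_iff.1 hsum i (mem_univ i), map_zero]

variable [AddCommGroup A] {M : AddSubmonoid A} {v : ι → A}

theorem eq_zero_of_linearCombination_eq_zero (hpos : ∀ a ∈ M, -a ∈ M → a = 0)
    (hvM : ∀ i, v i ∈ M) (hv0 : ∀ i, v i ≠ 0) {c : ι → ℕ}
    (hc : Fintype.linearCombination ℕ v c = 0) : c = 0 := by
  classical
  by_contra hne
  obtain ⟨i, hi⟩ := Function.ne_iff.1 hne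
  have hle : Pi.single i 1 ≤ c := fun j => by
    rcases eq_or_ne j i with rfl | hj
    · simpa using Nat.one_le_iff_ne_zero.2 hi
    · simp [Pi.single_eq_of_ne hj]
  have hsplit : v i + Fintype.linearCombination ℕ v (c - Pi.single i 1) = 0 := by
    rw [← hc, ← one_smul ℕ (v i), ← Fintype.linearCombination_apply_single, ← map_add,
      add_tsub_cancel_of_le hle]
  exact hv0 i <| hpos _ (hvM i) <|
    neg_eq_of_add_eq_zero_right hsplit ▸ linearCombination_mem hvM _

theorem isAntichain_linearCombination_fiber (hpos : ∀ a ∈ M, -a ∈ M → a = 0)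
    (hvM : ∀ i, v i ∈ M) (hv0 : ∀ i, v i ≠ 0) (x : A) :
    IsAntichain (· ≤ ·) {c : ι → ℕ | Fintype.linearCombination ℕ v c = x} := by
  intro c hc c' hc' hne hle
  have hdiff : Fintype.linearCombination ℕ v (c' - c) + x = x := by
    rw [← hc, ← map_add, tsub_add_cancel_of_le hle, hc', hc]
  have h0 := eq_zero_of_linearCombination_eq_zero hpos hvM hv0 (add_eq_right.1 hdiff)
  exact hne (le_antisymm hle (tsub_eq_zero_iff_le.1 h0))

theorem finite_linearCombination_fiber (hpos : ∀ a ∈ M, -a ∈ M → a = 0)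
    (hvM : ∀ i, v i ∈ M) (hv0 : ∀ i, v i ≠ 0) (x : A) :
    {c : ι → ℕ | Fintype.linearCombination ℕ v c = x}.Finite :=
  WellQuasiOrderedLE.finite_of_isAntichain (isAntichain_linearCombination_fiber hpos hvM hv0 x)

end Representations

section Irreducibles

variable {n : ℕ} {M : AddSubmonoid (Fin n → ℤ)}

theorem irreducibles_subset_of_closure_eq {S : Set (Fin n → ℤ)} (hSM : S ⊆ M)
    (hS : AddSubmonoid.closure S = M) : irreducibles M ⊆ S := by
  rintro x ⟨hxM, hx0, hirr⟩
  by_contra hxS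
  let M' : AddSubmonoid (Fin n → ℤ) :=
    { carrier := (M : Set (Fin n → ℤ)) \ {x}
      zero_mem' := ⟨M.zero_mem, Ne.symm hx0⟩
      add_mem' := fun {a b} ⟨haM, hax⟩ ⟨hbM, hbx⟩ => ⟨M.add_mem haM hbM, fun hab => by
        rcases hirr a haM b hbM hab.symm with rfl | rfl <;> simp_all⟩ }
  have hMM' : M ≤ M' :=
    hS ▸ AddSubmonoid.closure_le.2 fun y hy => ⟨hSM hy, fun hyx => hxS (hyx ▸ hy)⟩
  exact (hMM' hxM).2 rfl

theorem mem_closure_irreducibles_of_sum_le {ι : Type*} [Fintype ι] {v : ι → Fin n → ℤ}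
    (hsurj : ∀ x ∈ M, ∃ c, Fintype.linearCombination ℕ v c = x) (N : ℕ) :
    ∀ x ∈ M, (∀ c, Fintype.linearCombination ℕ v c = x → ∑ i, c i ≤ N) →
      x ∈ AddSubmonoid.closure (irreducibles M) := by
  induction N using Nat.strong_induction_on with
  | _ N ih =>
  intro x hxM hN
  by_cases hx0 : x = 0
  · exact hx0 ▸ zero_mem _
  by_cases hirr : ∀ a ∈ M, ∀ b ∈ M, x = a + b → a = 0 ∨ b = 0
  · exact AddSubmonoid.subset_closure ⟨hxM, hx0, hirr⟩
  push Not at hirr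
  obtain ⟨a, haM, b, hbM, rfl, ha0, hb0⟩ := hirr
  obtain ⟨ca, rfl⟩ := hsurj a haM
  obtain ⟨cb, rfl⟩ := hsurj b hbM
  have ha1 := one_le_sum_of_linearCombination_ne_zero ha0
  have hb1 := one_le_sum_of_linearCombination_ne_zero hb0
  have hlen : ∀ c c', Fintype.linearCombination ℕ v c + Fintype.linearCombination ℕ v c' =
      Fintype.linearCombination ℕ v ca + Fintype.linearCombination ℕ v cb →
      ∑ i, c i + ∑ i, c' i ≤ N := fun c c' h => by
    simpa only [Pi.add_apply, sum_add_distrib] using hN (c + c') (by rw [map_add, h])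
  have hlen_x := hlen ca cb rfl
  refine add_mem (ih (N - 1) (by omega) _ haM fun c hc => ?_)
    (ih (N - 1) (by omega) _ hbM fun c hc => ?_)
  · have := hlen c cb (by rw [hc])
    omega
  · have := hlen ca c (by rw [hc])
    omega

theorem le_closure_irreducibles (hpos : ∀ a ∈ M, -a ∈ M → a = 0) (hfg : M.FG) :
    M ≤ AddSubmonoid.closure (irreducibles M) := by
  classical
  obtain ⟨T, hT⟩ := hfg
  let v : T.erase 0 → Fin n → ℤ := (↑)
  have hvM : ∀ i, v i ∈ M := fun i => hT ▸ AddSubmonoid.subset_closure (mem_of_mem_erase i.2)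
  have hv0 : ∀ i, v i ≠ 0 := fun i => ne_of_mem_erase i.2
  have hsurj : ∀ x ∈ M, ∃ c, Fintype.linearCombination ℕ v c = x := by
    intro x hx
    rw [← hT, ← AddSubmonoid.closure_sdiff_singleton_zero, ← coe_erase,
      AddSubmonoid.mem_closure_finset'] at hx
    obtain ⟨c, rfl⟩ := hx
    exact ⟨c, Fintype.linearCombination_apply ℕ v c⟩
  intro x hx
  obtain ⟨N, hN⟩ := ((finite_linearCombination_fiber hpos hvM hv0 x).image
    fun c => ∑ i, c i).bddAbove
  exact mem_closure_irreducibles_of_sum_le hsurj N x hx fun c hc => hN ⟨c, hc, rfl⟩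

end Irreducibles

/-- A positive affine monoid `M ⊆ ℤⁿ` has a finite Hilbert basis: the set of
irreducible elements is finite, generates `M`, and is contained in every generating set,
i.e. it is the unique minimal system of generators. -/
theorem hilbert_basis_of_positive_affine_monoid
    (n : ℕ) (M : AddSubmonoid (Fin n → ℤ)) (hfg : M.FG)
    (hpos : ∀ a ∈ M, -a ∈ M → a = 0) :
    (irreducibles M).Finite ∧
    AddSubmonoid.closure (irreducibles M) = M ∧
    ∀ S : Set (Fin n → ℤ), S ⊆ (M : Set (Fin n → ℤ)) →
      AddSubmonoid.closure S = M → irreducibles M ⊆ S := by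
  obtain ⟨T, hT⟩ := id hfg
  have hTM : (T : Set (Fin n → ℤ)) ⊆ M := hT ▸ AddSubmonoid.subset_closure
  refine ⟨T.finite_toSet.subset (irreducibles_subset_of_closure_eq hTM hT), ?_,
    fun S => irreducibles_subset_of_closure_eq⟩
  exact le_antisymm (AddSubmonoid.closure_le.2 fun x hx => hx.1)
    (le_closure_irreducibles hpos hfg)
end

section
/- Let $C \subseteq \mathbb{R}^n$ be a pointed rational cone with support forms $\sigma_1, \dots, \sigma_s$, and let $y_1, \dots, y_m \in C \cap \mathbb{Z}^n$ be such that the sets $\sigma^>(y_i) = \{j : \sigma_j(y_i) > 0\}$ form a partition of $\{1, \dots, s\}$. Then every $x \in C$ can be written as $x = x' + \sum_{i=1}^m \lambda_i y_i$ where $\lambda_i = \min\{\sigma_j(x)/\sigma_j(y_i) : j \in \sigma^>(y_i)\} \ge 0$ and $x' \in C$ lies on a face of $C$ that, for each $i$, is contained in some facet $F_{j_i}$ with $j_i \in \sigma^>(y_i)$. -/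
open scoped BigOperators

/-- decomposition of a point of a pointed rational cone along the lattice
points `y₁, …, y_m` whose supports `σ^>(yᵢ)` partition the set of facets.  For `x ∈ C`
and `λᵢ = min {σⱼ x / σⱼ yᵢ : j ∈ σ^>(yᵢ)}` one has `λᵢ ≥ 0`, the point
`x' = x - ∑ λᵢ yᵢ` lies in `C`, and for each `i` the point `x'` lies on a facet
`F_{jᵢ}` with `jᵢ ∈ σ^>(yᵢ)`. -/
theorem cone_point_decomposition
    (n s m : ℕ) (σ : Fin s → ((Fin n → ℝ) →ₗ[ℝ] ℝ))
    (C : Set (Fin n → ℝ)) (hC : C = {x | ∀ j, 0 ≤ σ j x})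
    -- the representation is irredundant and the cone is pointed and rational
    (hirr : ∀ i, ∃ x, (∀ j, j ≠ i → 0 ≤ σ j x) ∧ σ i x < 0)
    (hpointed : ∀ x, x ∈ C → -x ∈ C → x = 0)
    (hrat : ∀ j k, ∃ q : ℚ, σ j (Pi.single k 1) = (q : ℝ))
    -- lattice points `y i ∈ C ∩ ℤⁿ`
    (y : Fin m → (Fin n → ℝ)) (hyC : ∀ i, y i ∈ C)
    (hyZ : ∀ i k, ∃ z : ℤ, y i k = (z : ℝ))
    -- the sets `σ^>(y i)` partition `{1, …, s}`
    (hdisj : ∀ i i', i ≠ i' → ∀ j, σ j (y i) = 0 ∨ σ j (y i') = 0)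
    (hne : ∀ i, ∃ j, 0 < σ j (y i))
    (hcover : ∀ j, ∃ i, 0 < σ j (y i))
    (x : Fin n → ℝ) (hx : x ∈ C)
    (lam : Fin m → ℝ)
    (hlam : ∀ i, IsGLB {r : ℝ | ∃ j, 0 < σ j (y i) ∧ r = σ j x / σ j (y i)} (lam i)) :
    (∀ i, 0 ≤ lam i) ∧
    (x - ∑ i, lam i • y i) ∈ C ∧
    ∀ i, ∃ j, 0 < σ j (y i) ∧ σ j (x - ∑ i', lam i' • y i') = 0 := by

  subst hC
  have hmem : ∀ i, lam i ∈ {r : ℝ | ∃ j, 0 < σ j (y i) ∧ r = σ j x / σ j (y i)} := by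
    intro i
    have hfin : ({r : ℝ | ∃ j, 0 < σ j (y i) ∧ r = σ j x / σ j (y i)}).Finite := by
      have hsub : {r : ℝ | ∃ j, 0 < σ j (y i) ∧ r = σ j x / σ j (y i)} ⊆
          (fun j => σ j x / σ j (y i)) '' Set.univ := by
        rintro r ⟨j, hj, rfl⟩; exact ⟨j, trivial, rfl⟩
      exact (((Set.finite_univ).image _).subset hsub)
    have hne' : ({r : ℝ | ∃ j, 0 < σ j (y i) ∧ r = σ j x / σ j (y i)}).Nonempty := by
      obtain ⟨j, hj⟩ := hne i; exact ⟨_, j, hj, rfl⟩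
    have heq := (hlam i).csInf_eq hne'
    rw [← heq]
    exact hne'.csInf_mem hfin
  have hlam0 : ∀ i, 0 ≤ lam i := by
    intro i
    obtain ⟨j, hj, hr⟩ := hmem i
    rw [hr]
    exact div_nonneg (hx j) hj.le
  have hlamle : ∀ i j, 0 < σ j (y i) → lam i ≤ σ j x / σ j (y i) := by
    intro i j hj
    exact (hlam i).1 ⟨j, hj, rfl⟩
  have hval : ∀ j, σ j (x - ∑ i, lam i • y i) = σ j x - ∑ i, lam i * σ j (y i) := by
    intro j
    simp [map_sub, map_sum, map_smul, smul_eq_mul]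
  have hsum : ∀ j (i0 : Fin m), 0 < σ j (y i0) →
      ∑ i, lam i * σ j (y i) = lam i0 * σ j (y i0) := by
    intro j i0 hi0
    refine Finset.sum_eq_single i0 ?_ (by simp)
    intro i _ hne'
    rcases hdisj i i0 hne' j with h | h
    · simp [h]
    · exact absurd h hi0.ne'
  refine ⟨hlam0, ?_, ?_⟩
  · intro j
    obtain ⟨i0, hi0⟩ := hcover j
    rw [hval j, hsum j i0 hi0, sub_nonneg]
    calc lam i0 * σ j (y i0) ≤ (σ j x / σ j (y i0)) * σ j (y i0) := by
          exact mul_le_mul_of_nonneg_right (hlamle i0 j hi0) hi0.le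
      _ = σ j x := div_mul_cancel₀ _ hi0.ne'
  · intro i
    obtain ⟨j, hj, hr⟩ := hmem i
    refine ⟨j, hj, ?_⟩
    rw [hval j, hsum j i hj, hr, div_mul_cancel₀ _ hj.ne', sub_self]
end

section
/- Let $C \subseteq \mathbb{R}^n$ be a pointed rational cone of dimension $n$ with support forms $\sigma_1, \dots, \sigma_s$ and facets $F_1, \dots, F_s$, and let $y_1, \dots, y_m \in C \cap \mathbb{Z}^n$ be such that the sets $\sigma^>(y_i)$ partition $\{1, \dots, s\}$ and $\sigma_j(y_1 + \cdots + y_m) = 1$ for all $j$. Then $y_1, \dots, y_m$ are part of a $\mathbb{Z}$-basis of $\mathbb{Z}^n$; in particular they are linearly independent. -/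
/-!
For each `yᵢ` pick a facet `j` with `σⱼ(yᵢ) > 0`. Since the supports are disjoint, `σⱼ`
vanishes on every other `yₖ`, and then `σⱼ(y₁ + ⋯ + y_m) = 1` forces `σⱼ(yᵢ) = 1`. So the `yᵢ`
carry a biorthogonal family of integral forms `fᵢ`. The map `F = (fᵢ)ᵢ : ℤⁿ → ℤᵐ` is split by
`c ↦ ∑ cᵢ yᵢ`, hence `ℤⁿ ≅ ker F × ℤᵐ`; as `ker F` is free, a basis of it together with the `yᵢ`
is a basis of `ℤⁿ`.
-/

open scoped BigOperators

noncomputable section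

open Module

universe u

theorem exists_biorthogonal_of_support_partition {R M ι J : Type*} [Semiring R]
    [AddCommMonoid M] [Module R M] [Fintype ι] [DecidableEq ι]
    (σ : J → M →ₗ[R] R) (y : ι → M)
    (hdisj : ∀ i i', i ≠ i' → ∀ j, σ j (y i) = 0 ∨ σ j (y i') = 0)
    (hne : ∀ i, ∃ j, σ j (y i) ≠ 0) (hsum : ∀ j, σ j (∑ i, y i) = 1) :
    ∃ f : ι → J, ∀ i k, σ (f i) (y k) = if i = k then 1 else 0 := by
  choose f hf using hne
  refine ⟨f, fun i => ?_⟩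
  have hvanish : ∀ k, k ≠ i → σ (f i) (y k) = 0 := fun k hk =>
    (hdisj i k (Ne.symm hk) (f i)).resolve_left (hf i)
  have hone : σ (f i) (y i) = 1 := by
    rw [← hsum (f i), map_sum, Finset.sum_eq_single i (fun k _ => hvanish k) (by simp)]
  intro k
  split_ifs with hik
  · exact hik ▸ hone
  · exact hvanish k (Ne.symm hik)

theorem Module.Basis.exists_sum_inl_eq_of_biorthogonal {R ι : Type*} {M : Type u} [CommRing R]
    [IsDomain R] [IsPrincipalIdealRing R] [AddCommGroup M] [Module R M] [Module.Free R M]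
    [Module.Finite R M] [Fintype ι] [DecidableEq ι] (y : ι → M) (f : ι → Dual R M)
    (hf : ∀ i k, f i (y k) = if i = k then 1 else 0) :
    ∃ (κ : Type u) (b : Basis (ι ⊕ κ) R M), ∀ i, b (.inl i) = y i := by
  set F : M →ₗ[R] ι → R := LinearMap.pi f
  set Y : (ι → R) →ₗ[R] M := Fintype.linearCombination R y
  have hFY : F ∘ₗ Y = .id := by
    ext i k
    simp [F, Y, Fintype.linearCombination_apply, hf, Pi.single_apply]
  have hexact := LinearMap.exact_subtype_ker_map F
  let splitting := hexact.splitSurjectiveEquiv (LinearMap.ker F).injective_subtype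
  set E := (splitting ⟨Y, hFY⟩).1
  have hE : E.symm.toLinearMap ∘ₗ LinearMap.inr R (LinearMap.ker F) (ι → R) = Y :=
    congrArg Subtype.val (splitting.symm_apply_apply ⟨Y, hFY⟩)
  refine ⟨_, (((Free.chooseBasis R (LinearMap.ker F)).prod (Pi.basisFun R ι)).map E.symm).reindex
    (Equiv.sumComm _ _), fun i => ?_⟩
  simpa [Y, Fintype.linearCombination_apply] using LinearMap.congr_fun hE (Pi.single i 1)

theorem part_of_basis_of_partition_general
    (n s m : ℕ) (σ : Fin s → ((Fin n → ℤ) →ₗ[ℤ] ℤ))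
    (y : Fin m → (Fin n → ℤ))
    (hdisj : ∀ i i', i ≠ i' → ∀ j, σ j (y i) = 0 ∨ σ j (y i') = 0)
    (hne : ∀ i, ∃ j, 0 < σ j (y i))
    (hsum : ∀ j, σ j (∑ i, y i) = 1) :
    (∃ (b : Module.Basis (Fin n) ℤ (Fin n → ℤ)) (g : Fin m → Fin n),
      Function.Injective g ∧ ∀ i, b (g i) = y i) ∧
    LinearIndependent ℤ y := by
  obtain ⟨j, hj⟩ := exists_biorthogonal_of_support_partition σ y hdisj
    (fun i => (hne i).imp fun _ h => h.ne') hsum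
  obtain ⟨κ, B, hB⟩ := Basis.exists_sum_inl_eq_of_biorthogonal y (σ ∘ j) hj
  let e := B.indexEquiv (Pi.basisFun ℤ (Fin n))
  refine ⟨⟨B.reindex e, e ∘ Sum.inl, e.injective.comp Sum.inl_injective, fun i => by simp [hB]⟩, ?_⟩
  simpa [Function.comp_def, hB] using B.linearIndependent.comp Sum.inl Sum.inl_injective

/-- if the supports `σ^>(yᵢ)` of lattice points `y₁, …, y_m` of a
full-dimensional pointed rational cone `C ⊆ ℝⁿ` partition the set of facets and
`σⱼ(y₁ + ⋯ + y_m) = 1` for all `j`, then `y₁, …, y_m` are part of a `ℤ`-basis of `ℤⁿ`;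
in particular they are linearly independent. -/
theorem part_of_basis_of_partition
    (n s m : ℕ) (σ : Fin s → ((Fin n → ℤ) →ₗ[ℤ] ℤ))
    (C : Set (Fin n → ℝ)) (hC : C = {x | ∀ j, 0 ≤ realForm (σ j) x})
    (hirr : ∀ i, ∃ x, (∀ j, j ≠ i → 0 ≤ realForm (σ j) x) ∧ realForm (σ i) x < 0)
    (hpointed : ∀ x, x ∈ C → -x ∈ C → x = 0)
    (hfulldim : ∃ x, ∀ j, 0 < realForm (σ j) x)
    (hprim : ∀ i, Finset.univ.gcd (fun k => σ i (Pi.single k 1)) = 1)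
    (y : Fin m → (Fin n → ℤ)) (hyC : ∀ i, toR (y i) ∈ C)
    (hdisj : ∀ i i', i ≠ i' → ∀ j, σ j (y i) = 0 ∨ σ j (y i') = 0)
    (hne : ∀ i, ∃ j, 0 < σ j (y i))
    (hsum : ∀ j, σ j (∑ i, y i) = 1) :
    (∃ (b : Module.Basis (Fin n) ℤ (Fin n → ℤ)) (g : Fin m → Fin n),
      Function.Injective g ∧ ∀ i, b (g i) = y i) ∧
    LinearIndependent ℤ y :=
  part_of_basis_of_partition_general n s m σ y hdisj hne hsum
end
end

section
/- Let $C \subseteq \mathbb{R}^n$ be a pointed rational cone with support forms $\sigma_1, \dots, \sigma_s$, let $y_1, \dots, y_m \in C \cap \mathbb{Z}^n$ with the sets $\sigma^>(y_i)$ partitioning $\{1, \dots, s\}$, and let $G$ be a simplicial subcone of $C$ contained in a face $F_{j_1, \dots, j_m} = F_{j_1} \cap \cdots \cap F_{j_m}$ with $j_i \in \sigma^>(y_i)$, with extreme generators $v_1, \dots, v_r$. Then $v_1, \dots, v_r, y_1, \dots, y_m$ are linearly independent; in particular $\mathrm{cone}(G, y_1, \dots, y_m)$ is simplicial. -/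
open scoped BigOperators

/-- Let `C` be a pointed rational cone with support forms `σ`, let the
supports `σ^>(yᵢ)` of `y₁, …, y_m ∈ C ∩ ℤⁿ` partition the facets, and let `G ⊆ C` be a
simplicial cone with extreme generators `v₁, …, v_r` contained in a face
`F_{j₁} ∩ ⋯ ∩ F_{j_m}` with `jᵢ ∈ σ^>(yᵢ)`.  Then `v₁, …, v_r, y₁, …, y_m` are linearly
independent; in particular `cone(G, y₁, …, y_m)` is simplicial. -/
theorem cone_with_interior_points_simplicial
    (n s m r : ℕ) (σ : Fin s → ((Fin n → ℝ) →ₗ[ℝ] ℝ))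
    (C : Set (Fin n → ℝ)) (hC : C = {x | ∀ j, 0 ≤ σ j x})
    (hirr : ∀ i, ∃ x, (∀ j, j ≠ i → 0 ≤ σ j x) ∧ σ i x < 0)
    (hpointed : ∀ x, x ∈ C → -x ∈ C → x = 0)
    -- lattice points `y i ∈ C` with pairwise disjoint supports
    (y : Fin m → (Fin n → ℝ)) (hyC : ∀ i, y i ∈ C)
    (hyZ : ∀ i k, ∃ z : ℤ, y i k = (z : ℝ))
    (hdisj : ∀ i i', i ≠ i' → ∀ j, σ j (y i) = 0 ∨ σ j (y i') = 0)
    -- the chosen facet indices `j i ∈ σ^>(y i)`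
    (j : Fin m → Fin s) (hj : ∀ i, 0 < σ (j i) (y i))
    -- the extreme generators of the simplicial cone `G` inside the face
    (v : Fin r → (Fin n → ℝ)) (hvC : ∀ l, v l ∈ C)
    (hvface : ∀ i l, σ (j i) (v l) = 0)
    (hvind : LinearIndependent ℝ v) :
    LinearIndependent ℝ (Sum.elim v y) := by
  rw [Fintype.linearIndependent_iff]
  intro g hg
  rw [Fintype.sum_sum_type] at hg
  simp only [Sum.elim_inl, Sum.elim_inr] at hg
  have hyzero : ∀ i, g (Sum.inr i) = 0 := by
    intro i
    have := congrArg (σ (j i)) hg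
    simp only [map_add, map_sum, map_smul, map_zero, smul_eq_mul] at this
    have h1 : ∑ l : Fin r, g (Sum.inl l) * σ (j i) (v l) = 0 := by
      apply Finset.sum_eq_zero
      intro l _
      rw [hvface i l, mul_zero]
    have h2 : ∑ i' : Fin m, g (Sum.inr i') * σ (j i) (y i') =
        g (Sum.inr i) * σ (j i) (y i) := by
      rw [Finset.sum_eq_single i]
      · intro i' _ hne
        rcases hdisj i i' (Ne.symm hne) (j i) with h | h
        · exact absurd h (ne_of_gt (hj i))
        · rw [h, mul_zero]
      · intro h; exact absurd (Finset.mem_univ i) h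
    rw [h1, h2, zero_add] at this
    exact (mul_eq_zero.mp this).resolve_right (ne_of_gt (hj i))
  have hv0 : ∑ l : Fin r, g (Sum.inl l) • v l = 0 := by
    have : ∑ i : Fin m, g (Sum.inr i) • y i = 0 := by
      apply Finset.sum_eq_zero
      intro i _; rw [hyzero i, zero_smul]
    rwa [this, add_zero] at hg
  have hv := Fintype.linearIndependent_iff.mp hvind (fun l => g (Sum.inl l)) hv0
  rintro (l | i)
  · exact hv l
  · exact hyzero i
end

section
/- Let $f : Q \to \mathbb{R}$ be a convex piecewise affine function on a polytope $Q \subseteq \mathbb{R}^{n-1}$ with $f > 0$, let $G \subseteq \mathbb{R}^n$ be its graph, and let $v = (x, z)$ with $x \in \mathrm{relint}(Q)$ and $z$ chosen below all hyperplanes spanned by the facets of $G$. Then the union $C$ of all rays emanating from $v$ through points of $G$ is a convex set. -/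
open scoped BigOperators

/-- let `f` be a positive convex piecewise affine function on a polytope
`Q ⊆ ℝ^{n}` with graph `G ⊆ ℝ^{n} × ℝ`, and let `v = (x, z)` with `x ∈ relint Q` and `z`
below all the affine pieces of `f` at `x`.  Then the union `C` of all rays emanating
from `v` through points of `G` is convex. -/
theorem cone_over_graph_convex
    (n : ℕ) (V : Finset (Fin n → ℝ)) (hV : V.Nonempty)
    (Q : Set (Fin n → ℝ)) (hQ : Q = convexHull ℝ (V : Set (Fin n → ℝ)))
    (f : (Fin n → ℝ) → ℝ) (hconv : ConvexOn ℝ Q f) (hfpos : ∀ q ∈ Q, 0 < f q)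
    -- `f` is piecewise affine: on `Q` it is the maximum of the finitely many affine
    -- functions `ℓ ∈ L` agreeing with it on its domains of linearity
    (L : Finset ((Fin n → ℝ) →ᵃ[ℝ] ℝ)) (hL : L.Nonempty)
    (hpw : ∀ q ∈ Q, ∃ ℓ ∈ L, f q = ℓ q)
    (hbelow : ∀ q ∈ Q, ∀ ℓ ∈ L, ℓ q ≤ f q)
    -- the apex `v = (x, z)` with `x ∈ relint Q` and `z` below all affine pieces
    (x : Fin n → ℝ) (hx : x ∈ intrinsicInterior ℝ Q)
    (z : ℝ) (hz : ∀ ℓ ∈ L, z < ℓ x)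
    (C : Set ((Fin n → ℝ) × ℝ))
    (hC : C = {c | ∃ q ∈ Q, ∃ t : ℝ, 0 ≤ t ∧
      c = ((x, z) : (Fin n → ℝ) × ℝ) + t • (((q, f q) : (Fin n → ℝ) × ℝ) - (x, z))}) :
    Convex ℝ C := by
  have hQconv : Convex ℝ Q := hQ ▸ convex_convexHull ℝ _
  have hxQ : x ∈ Q := intrinsicInterior_subset hx
  -- F : continuous extension of f
  set F : (Fin n → ℝ) → ℝ := fun p => L.sup' hL fun ℓ => ℓ p with hF
  have hFf : ∀ q ∈ Q, F q = f q := by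
    intro q hq
    apply le_antisymm
    · exact Finset.sup'_le hL _ fun ℓ hℓ => hbelow q hq ℓ hℓ
    · obtain ⟨ℓ, hℓL, hℓ⟩ := hpw q hq
      exact hℓ ▸ Finset.le_sup' (fun ℓ => ℓ q) hℓL
  have hFcont : Continuous F :=
    Continuous.finset_sup'_apply hL fun ℓ _ => ℓ.continuous_of_finiteDimensional
  have hzfx : z < f x := by
    obtain ⟨ℓ, hℓL, hℓ⟩ := hpw x hxQ
    exact hℓ ▸ hz ℓ hℓL
  -- key lemma: the ray from v through any point above the graph lies in C
  have key : ∀ q ∈ Q, ∀ s : ℝ, f q ≤ s → ∀ T : ℝ, 0 ≤ T →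
      ((x, z) : (Fin n → ℝ) × ℝ) + T • (((q, s) : (Fin n → ℝ) × ℝ) - (x, z)) ∈ C := by
    intro q hq s hs T hT
    set g : ℝ → ℝ := fun α => F (x + α • (q - x)) - z - α * (s - z) with hg
    have hseg : ∀ α : ℝ, α ∈ Set.Icc (0:ℝ) 1 → x + α • (q - x) ∈ Q := by
      intro α hα
      have : x + α • (q - x) = (1 - α) • x + α • q := by
        rw [smul_sub]; module
      rw [this]
      exact hQconv hxQ hq (by linarith [hα.2]) hα.1 (by ring)
    have hgcont : ContinuousOn g (Set.Icc 0 1) := by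
      apply ContinuousOn.sub
      apply ContinuousOn.sub
      · exact (hFcont.comp (continuous_const.add (continuous_id.smul continuous_const))).continuousOn
      · exact continuousOn_const
      · exact (continuous_id.mul continuous_const).continuousOn
    have hg0 : 0 < g 0 := by
      have : F (x + (0:ℝ) • (q - x)) = f x := by
        rw [zero_smul, add_zero]; exact hFf x hxQ
      simp only [hg, this]; linarith
    have hg1 : g 1 ≤ 0 := by
      have : F (x + (1:ℝ) • (q - x)) = f q := by
        rw [one_smul, add_sub_cancel]; exact hFf q hq
      simp only [hg, this]; linarith
    obtain ⟨α, hα, hgα⟩ : ∃ α ∈ Set.Icc (0:ℝ) 1, g α = 0 := by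
      have := intermediate_value_Icc' (by norm_num : (0:ℝ) ≤ 1) hgcont
        (Set.mem_Icc.mpr ⟨hg1, hg0.le⟩)
      obtain ⟨α, hα, hgα⟩ := this
      exact ⟨α, hα, hgα⟩
    have hαpos : 0 < α := by
      rcases lt_or_eq_of_le hα.1 with h | h
      · exact h
      · exfalso; rw [← h] at hgα; linarith
    set q' : Fin n → ℝ := x + α • (q - x) with hq'
    have hq'Q : q' ∈ Q := hseg α hα
    have hfq' : f q' - z = α * (s - z) := by
      have := hFf q' hq'Q
      simp only [hg] at hgα
      linarith [hgα, this]
    rw [hC]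
    refine ⟨q', hq'Q, T / α, div_nonneg hT hαpos.le, ?_⟩
    congr 1
    have h1 : (T / α) • (q' - x) = T • (q - x) := by
      rw [hq', add_sub_cancel_left, smul_smul, div_mul_cancel₀ _ hαpos.ne']
    have h2 : (T / α) * (f q' - z) = T * (s - z) := by
      rw [hfq']; field_simp
    have : (((q, s) : (Fin n → ℝ) × ℝ) - (x, z)) = (q - x, s - z) := rfl
    rw [this]
    have : (((q', f q') : (Fin n → ℝ) × ℝ) - (x, z)) = (q' - x, f q' - z) := rfl
    rw [this, Prod.smul_mk, Prod.smul_mk, Prod.mk.injEq]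
    exact ⟨h1.symm, by simpa [smul_eq_mul] using h2.symm⟩
  -- now prove convexity
  intro c₁ hc₁ c₂ hc₂ a b ha hb hab
  rw [hC] at hc₁ hc₂
  obtain ⟨q₁, hq₁, t₁, ht₁, rfl⟩ := hc₁
  obtain ⟨q₂, hq₂, t₂, ht₂, rfl⟩ := hc₂
  set T : ℝ := a * t₁ + b * t₂ with hT
  rcases eq_or_lt_of_le (by positivity : (0:ℝ) ≤ T) with hT0 | hT0
  · -- T = 0 : the combination is v itself
    have h1 : a * t₁ = 0 := by nlinarith [mul_nonneg ha ht₁, mul_nonneg hb ht₂]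
    have h2 : b * t₂ = 0 := by nlinarith [mul_nonneg ha ht₁, mul_nonneg hb ht₂]
    have : a • (((x, z) : (Fin n → ℝ) × ℝ) + t₁ • ((q₁, f q₁) - (x, z)))
        + b • (((x, z) : (Fin n → ℝ) × ℝ) + t₂ • ((q₂, f q₂) - (x, z)))
        = ((x, z) : (Fin n → ℝ) × ℝ) := by
      have e1 : a • (t₁ • (((q₁, f q₁) : (Fin n → ℝ) × ℝ) - (x, z)))
          = (0 : (Fin n → ℝ) × ℝ) := by rw [smul_smul, h1, zero_smul]
      have e2 : b • (t₂ • (((q₂, f q₂) : (Fin n → ℝ) × ℝ) - (x, z)))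
          = (0 : (Fin n → ℝ) × ℝ) := by rw [smul_smul, h2, zero_smul]
      rw [smul_add, smul_add, e1, e2, add_zero, add_zero, ← add_smul, hab, one_smul]
    rw [this, hC]
    exact ⟨x, hxQ, 0, le_refl 0, by simp⟩
  · -- T > 0
    set θ : ℝ := a * t₁ / T with hθ
    have hθ0 : 0 ≤ θ := div_nonneg (mul_nonneg ha ht₁) hT0.le
    have hθ1 : θ ≤ 1 := by
      rw [div_le_one hT0]
      nlinarith [mul_nonneg hb ht₂]
    set qb : Fin n → ℝ := θ • q₁ + (1 - θ) • q₂ with hqb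
    have hqbQ : qb ∈ Q := hQconv hq₁ hq₂ hθ0 (by linarith) (by ring)
    set sb : ℝ := θ * f q₁ + (1 - θ) * f q₂ with hsb
    have hfqb : f qb ≤ sb := hconv.2 hq₁ hq₂ hθ0 (by linarith) (by ring)
    have hmem := key qb hqbQ sb hfqb T hT0.le
    have heq : a • (((x, z) : (Fin n → ℝ) × ℝ) + t₁ • ((q₁, f q₁) - (x, z)))
        + b • (((x, z) : (Fin n → ℝ) × ℝ) + t₂ • ((q₂, f q₂) - (x, z)))
        = ((x, z) : (Fin n → ℝ) × ℝ) + T • (((qb, sb) : (Fin n → ℝ) × ℝ) - (x, z)) := by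
      have hq' : ((qb, sb) : (Fin n → ℝ) × ℝ)
          = θ • ((q₁, f q₁) : (Fin n → ℝ) × ℝ) + (1 - θ) • ((q₂, f q₂) : (Fin n → ℝ) × ℝ) := by
        simp [hqb, hsb, Prod.smul_mk, Prod.mk_add_mk, smul_eq_mul]
      have e1 : T * θ = a * t₁ := by
        rw [hθ, mul_div_cancel₀ _ hT0.ne']
      have e2 : T * (1 - θ) = b * t₂ := by
        rw [hθ]; field_simp; ring
      rw [hq']
      have expand : T • (θ • ((q₁, f q₁) : (Fin n → ℝ) × ℝ)
          + (1 - θ) • ((q₂, f q₂) : (Fin n → ℝ) × ℝ) - (x, z))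
          = (a * t₁) • (((q₁, f q₁) : (Fin n → ℝ) × ℝ) - (x, z))
          + (b * t₂) • (((q₂, f q₂) : (Fin n → ℝ) × ℝ) - (x, z)) := by
        rw [← e1, ← e2]
        module
      rw [expand]
      have : a • (((x, z) : (Fin n → ℝ) × ℝ) + t₁ • ((q₁, f q₁) - (x, z)))
          + b • (((x, z) : (Fin n → ℝ) × ℝ) + t₂ • ((q₂, f q₂) - (x, z)))
          = (a + b) • ((x, z) : (Fin n → ℝ) × ℝ)
            + ((a * t₁) • (((q₁, f q₁) : (Fin n → ℝ) × ℝ) - (x, z))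
              + (b * t₂) • (((q₂, f q₂) : (Fin n → ℝ) × ℝ) - (x, z))) := by
        module
      rw [this, hab, one_smul]
    rw [heq]
    exact hmem
end
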